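/- arXiv:2005.01280 — 2 statements merged into one kernel-verified Lean document; each statement's English description precedes it below -/
import Mathlib

section
/- Let m, n be positive integers, let ε > 0, and let x_1, …, x_n ∈ ℝ^m. Suppose there is an integer j* with 1 ≤ j* < n and a real number v* such that v_j = v* for every j with j* ≤ j ≤ n. Let y_1, …, y_ℓ ∈ ℝ^m be such that for every j ∈ {1,…,j*} there exists k ∈ {1,…,ℓ} with ‖x_j − y_k‖ < ε, and let P be the orthogonal projection of ℝ^m onto the linear span of {y_1,…,y_ℓ}. Then for every integer i ≥ 1 with j* + i ≤ n satisfying the horizon inequality i·(1 − v*) < j*·v* − (1 − v*)/2, one has ‖x_{j*+i} − P x_{j*+i}‖ < 4ε. -/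
/-- The recurrence count `N_j`: the number of pairs `(i,k) ∈ {1,…,j}²` with
`‖x_i − x_k‖ < ε`. -/
noncomputable def recCount {m : ℕ} (x : ℕ → EuclideanSpace ℝ (Fin m)) (ε : ℝ) (j : ℕ) : ℕ :=
  (((Finset.Icc 1 j) ×ˢ (Finset.Icc 1 j)).filter (fun p => ‖x p.1 - x p.2‖ < ε)).card

/-- The ε-Frobenius potential `v_j = N_j / j²`. -/
noncomputable def frobPot {m : ℕ} (x : ℕ → EuclideanSpace ℝ (Fin m)) (ε : ℝ) (j : ℕ) : ℝ :=
  (recCount x ε j : ℝ) / (j : ℝ) ^ 2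

/-!
Appending `x_{j+1}` raises the recurrence count by `2·#{k ≤ j : ‖x_{j+1} − x_k‖ < ε} + 1`: the
new off-diagonal pairs come in symmetric couples, plus the diagonal pair. While the potential
stays equal to `v* ≤ 1` this increment is `v*(2j + 1)`, and for `j = j* + i − 1` the horizon
inequality makes it exceed `2(j − j*) + 1`. By pigeonhole some ε-neighbour of `x_{j*+i}` has
index at most `j*`, so is ε-close to some `y_k`; hence `x_{j*+i}` lies within `2ε` of the span,
and the orthogonal projection is the nearest point of the span.
-/

open Finset

theorem exists_mem_le_of_sub_lt_card {s : Finset ℕ} {a b : ℕ} (hs : s ⊆ Iic b)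
    (h : b - a < #s) : ∃ k ∈ s, k ≤ a := by
  by_contra! hlt
  have : s ⊆ Ioc a b := fun k hk => mem_Ioc.2 ⟨hlt k hk, mem_Iic.1 (hs hk)⟩
  have := card_le_card this
  rw [Nat.card_Ioc] at this
  omega

theorem Submodule.norm_sub_starProjection_le {E : Type*} [NormedAddCommGroup E]
    [InnerProductSpace ℝ E] (K : Submodule ℝ E) [K.HasOrthogonalProjection] (v : E) {w : E}
    (hw : w ∈ K) : ‖v - K.starProjection v‖ ≤ ‖v - w‖ := by
  rw [starProjection_minimal]
  exact ciInf_le ⟨0, fun _ ⟨_, h⟩ => h ▸ norm_nonneg _⟩ (⟨w, hw⟩ : K)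

noncomputable def earlierNeighbors {m : ℕ} (x : ℕ → EuclideanSpace ℝ (Fin m)) (ε : ℝ) (j : ℕ) :
    Finset ℕ :=
  (Icc 1 j).filter fun k => ‖x (j + 1) - x k‖ < ε

section RecurrenceCount

variable {m : ℕ} (x : ℕ → EuclideanSpace ℝ (Fin m)) {ε : ℝ}

theorem recCount_succ (hε : 0 < ε) (j : ℕ) :
    recCount x ε (j + 1) = recCount x ε j + 2 * #(earlierNeighbors x ε j) + 1 := by
  have hIcc : Icc 1 (j + 1) = insert (j + 1) (Icc 1 j) :=
    (insert_Icc_right_eq_Icc_add_one (by omega)).symm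
  have hj : j + 1 ∉ Icc 1 j := by simp
  simp only [recCount, earlierNeighbors, card_filter, sum_product, hIcc, sum_insert hj,
    sub_self, norm_zero, hε, if_true, sum_add_distrib]
  simp_rw [norm_sub_rev (x _) (x (j + 1))]
  ring

theorem recCount_eq_frobPot_mul_sq (ε : ℝ) (j : ℕ) :
    (recCount x ε j : ℝ) = frobPot x ε j * (j : ℝ) ^ 2 := by
  rcases Nat.eq_zero_or_pos j with rfl | hj
  · simp [recCount]
  · rw [frobPot, div_mul_cancel₀]
    positivity

theorem recCount_le_sq (ε : ℝ) (j : ℕ) : recCount x ε j ≤ j ^ 2 :=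
  (card_filter_le _ _).trans (by simp [sq])

theorem frobPot_le_one (ε : ℝ) (j : ℕ) : frobPot x ε j ≤ 1 :=
  div_le_one_of_le₀ (by exact_mod_cast recCount_le_sq x ε j) (by positivity)

theorem two_mul_card_earlierNeighbors (hε : 0 < ε) {j : ℕ} {v : ℝ}
    (hj : frobPot x ε j = v) (hj' : frobPot x ε (j + 1) = v) :
    2 * (#(earlierNeighbors x ε j) : ℝ) = v * (2 * j + 1) - 1 := by
  have h := congrArg (fun n : ℕ => (n : ℝ)) (recCount_succ x hε j)
  simp only [Nat.cast_add, Nat.cast_mul, Nat.cast_ofNat, Nat.cast_one,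
    recCount_eq_frobPot_mul_sq, hj, hj'] at h
  linarith

theorem exists_le_mem_earlierNeighbors_of_frobPot_eq (hε : 0 < ε) {jstar i : ℕ} {v : ℝ}
    (hj : frobPot x ε (jstar + i) = v) (hj' : frobPot x ε (jstar + i + 1) = v)
    (hhor : (i + 1 : ℝ) * (1 - v) < jstar * v - (1 - v) / 2) :
    ∃ k ∈ earlierNeighbors x ε (jstar + i), k ≤ jstar := by
  have hcard := two_mul_card_earlierNeighbors x hε hj hj'
  refine exists_mem_le_of_sub_lt_card (filter_subset _ _ |>.trans Icc_subset_Iic_self) ?_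
  rw [Nat.add_sub_cancel_left]
  have hv := hj ▸ frobPot_le_one x ε (jstar + i)
  push_cast at hcard
  exact_mod_cast (by linarith : (i : ℝ) < #(earlierNeighbors x ε (jstar + i)))

end RecurrenceCount

theorem stmt_3_general (m n ℓ : ℕ) (ε : ℝ) (hε : 0 < ε)
    (x : ℕ → EuclideanSpace ℝ (Fin m)) (jstar : ℕ)
    (vstar : ℝ) (hconst : ∀ j : ℕ, jstar ≤ j → j ≤ n → frobPot x ε j = vstar)
    (y : ℕ → EuclideanSpace ℝ (Fin m))
    (hcov : ∀ j : ℕ, 1 ≤ j → j ≤ jstar → ∃ k : ℕ, 1 ≤ k ∧ k ≤ ℓ ∧ ‖x j - y k‖ < ε) :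
    ∀ i : ℕ, 1 ≤ i → jstar + i ≤ n →
      (i : ℝ) * (1 - vstar) < (jstar : ℝ) * vstar - (1 - vstar) / 2 →
      ‖x (jstar + i) -
        (Submodule.orthogonalProjection (Submodule.span ℝ (y '' Set.Icc 1 ℓ)) (x (jstar + i)) :
          EuclideanSpace ℝ (Fin m))‖ < 4 * ε := by
  rintro (_ | i) hi hin hhor
  · omega
  rw [← add_assoc] at hin ⊢
  obtain ⟨k, hk, hkj⟩ := exists_le_mem_earlierNeighbors_of_frobPot_eq x hε
    (hconst (jstar + i) (by omega) (by omega)) (hconst (jstar + i + 1) (by omega) hin)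
    (by exact_mod_cast hhor)
  obtain ⟨hk, hxk⟩ := mem_filter.1 hk
  obtain ⟨k', hk'1, hk'ℓ, hyk'⟩ := hcov k (mem_Icc.1 hk).1 hkj
  have hy : y k' ∈ Submodule.span ℝ (y '' Set.Icc 1 ℓ) :=
    Submodule.subset_span (Set.mem_image_of_mem y ⟨hk'1, hk'ℓ⟩)
  calc _ ≤ ‖x (jstar + i + 1) - y k'‖ := Submodule.norm_sub_starProjection_le _ _ hy
    _ ≤ ‖x (jstar + i + 1) - x k‖ + ‖x k - y k'‖ := norm_sub_le_norm_sub_add_norm_sub _ _ _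
    _ < 4 * ε := by linarith

/-- if the ε-Frobenius potential is constantly `v*` from time `j*` on, the
vectors `y_1,…,y_ℓ` cover `x_1,…,x_{j*}` within distance `ε`, and `P` is the orthogonal
projection onto the span of the `y_k`, then for every `i ≥ 1` with `j* + i ≤ n`
satisfying the horizon inequality `i(1 − v*) < j* v* − (1 − v*)/2`, one has
`‖x_{j*+i} − P x_{j*+i}‖ < 4ε`. -/
theorem stmt_3 (m n ℓ : ℕ) (hm : 0 < m) (hn : 0 < n) (hℓ : 0 < ℓ) (ε : ℝ) (hε : 0 < ε)
    (x : ℕ → EuclideanSpace ℝ (Fin m)) (jstar : ℕ) (hj1 : 1 ≤ jstar) (hjn : jstar < n)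
    (vstar : ℝ) (hconst : ∀ j : ℕ, jstar ≤ j → j ≤ n → frobPot x ε j = vstar)
    (y : ℕ → EuclideanSpace ℝ (Fin m))
    (hcov : ∀ j : ℕ, 1 ≤ j → j ≤ jstar → ∃ k : ℕ, 1 ≤ k ∧ k ≤ ℓ ∧ ‖x j - y k‖ < ε) :
    ∀ i : ℕ, 1 ≤ i → jstar + i ≤ n →
      (i : ℝ) * (1 - vstar) < (jstar : ℝ) * vstar - (1 - vstar) / 2 →
      ‖x (jstar + i) -
        (Submodule.orthogonalProjection (Submodule.span ℝ (y '' Set.Icc 1 ℓ)) (x (jstar + i)) :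
          EuclideanSpace ℝ (Fin m))‖ < 4 * ε :=
  stmt_3_general m n ℓ ε hε x jstar vstar hconst y hcov
end

section
/- Let m, n be positive integers, let x_1, …, x_n ∈ ℝ^m, and let ε > 0. Suppose there is an integer j* with 1 ≤ j* < n and a real number v* such that v_j = v* for every j with j* ≤ j ≤ n. Then for every integer i ≥ 1 with j* + i ≤ n satisfying the horizon inequality i·(1 − v*) < j*·v* − (1 − v*)/2, there exists an index k ∈ {1,…,j*} such that ‖x_{j*+i} − x_k‖ < ε. -/
lemma recCount_succ_s8 {m : ℕ} (x : ℕ → EuclideanSpace ℝ (Fin m)) (ε : ℝ) (hε : 0 < ε) (j : ℕ) :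
    recCount x ε (j+1) = recCount x ε j
      + (2 * ((Finset.Icc 1 j).filter (fun k => ‖x (j+1) - x k‖ < ε)).card + 1) := by
  classical
  set a := j + 1 with ha
  set A := Finset.Icc 1 (j+1) with hA
  set B := Finset.Icc 1 j with hB
  set P : ℕ × ℕ → Prop := fun p => ‖x p.1 - x p.2‖ < ε with hP
  have hsplit : A ×ˢ A = (B ×ˢ B) ∪ (({a} : Finset ℕ) ×ˢ A) ∪ (B ×ˢ ({a} : Finset ℕ)) := by
    ext ⟨p, q⟩
    simp only [Finset.mem_product, Finset.mem_union, Finset.mem_Icc, Finset.mem_singleton, hA, hB, ha]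
    omega
  have hd1 : Disjoint ((B ×ˢ B).filter P) ((({a} : Finset ℕ) ×ˢ A).filter P) := by
    rw [Finset.disjoint_left]
    rintro ⟨p, q⟩ hp hq
    simp only [Finset.mem_filter, Finset.mem_product, Finset.mem_Icc, Finset.mem_singleton, hB, ha] at hp hq
    omega
  have hd2 : Disjoint (((B ×ˢ B).filter P) ∪ ((({a} : Finset ℕ) ×ˢ A).filter P)) ((B ×ˢ ({a} : Finset ℕ)).filter P) := by
    rw [Finset.disjoint_left]
    rintro ⟨p, q⟩ hp hq
    simp only [Finset.mem_filter, Finset.mem_union, Finset.mem_product, Finset.mem_Icc,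
      Finset.mem_singleton, hB, hA, ha] at hp hq
    omega
  have hcard : recCount x ε (j+1) = recCount x ε j
      + ((({a} : Finset ℕ) ×ˢ A).filter P).card + ((B ×ˢ ({a} : Finset ℕ)).filter P).card := by
    unfold recCount
    rw [← hA, ← hB, hsplit, Finset.filter_union, Finset.filter_union,
      Finset.card_union_of_disjoint hd2, Finset.card_union_of_disjoint hd1]
  -- card of {a} ×ˢ A part
  have h1 : ((({a} : Finset ℕ) ×ˢ A).filter P).card
      = (A.filter (fun k => ‖x a - x k‖ < ε)).card := by
    rw [Finset.singleton_product, Finset.filter_map, Finset.card_map]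
    rfl
  have h2 : ((B ×ˢ ({a} : Finset ℕ)).filter P).card
      = (B.filter (fun k => ‖x a - x k‖ < ε)).card := by
    rw [Finset.product_singleton, Finset.filter_map, Finset.card_map]
    congr 1
    apply Finset.filter_congr
    intro k _
    simp [P, norm_sub_rev]
  have hAins : A = insert a B := by
    ext k
    simp only [Finset.mem_Icc, Finset.mem_insert, hA, hB, ha]
    omega
  have h3 : (A.filter (fun k => ‖x a - x k‖ < ε)).card
      = (B.filter (fun k => ‖x a - x k‖ < ε)).card + 1 := by
    rw [hAins, Finset.filter_insert]
    simp only [sub_self, norm_zero, hε, if_true]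
    rw [Finset.card_insert_of_notMem]
    intro hmem
    have := Finset.mem_of_mem_filter a hmem
    simp [hB, ha] at this
  have h4 : (B.filter (fun k => ‖x a - x k‖ < ε)).card
      = ((Finset.Icc 1 j).filter (fun k => ‖x (j+1) - x k‖ < ε)).card := by rfl
  rw [hcard, h1, h3, h2]
  omega

/-- if the ε-Frobenius potential equals `v*` for all `j* ≤ j ≤ n`, then for
every `i ≥ 1` with `j* + i ≤ n` satisfying the horizon inequality
`i(1 − v*) < j* v* − (1 − v*)/2`, the snapshot `x_{j*+i}` lies within distance `ε` of some
snapshot `x_k` with `k ∈ {1,…,j*}`. -/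
theorem stmt_8 (m n : ℕ) (hm : 0 < m) (hn : 0 < n)
    (x : ℕ → EuclideanSpace ℝ (Fin m)) (ε : ℝ) (hε : 0 < ε)
    (jstar : ℕ) (hj1 : 1 ≤ jstar) (hjn : jstar < n) (vstar : ℝ)
    (hconst : ∀ j : ℕ, jstar ≤ j → j ≤ n → frobPot x ε j = vstar) :
    ∀ i : ℕ, 1 ≤ i → jstar + i ≤ n →
      (i : ℝ) * (1 - vstar) < (jstar : ℝ) * vstar - (1 - vstar) / 2 →
      ∃ k : ℕ, 1 ≤ k ∧ k ≤ jstar ∧ ‖x (jstar + i) - x k‖ < ε := by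
  classical
  intro i hi1 hin hhor
  obtain ⟨i', rfl⟩ : ∃ i', i = i' + 1 := ⟨i - 1, by omega⟩
  set j' := jstar + i' with hj'
  have hEq : jstar + (i' + 1) = j' + 1 := by omega
  -- vstar ≤ 1
  have hjpos : (0 : ℝ) < (jstar : ℝ) := by exact_mod_cast hj1
  have hNjs : recCount x ε jstar ≤ jstar * jstar := by
    calc recCount x ε jstar ≤ ((Finset.Icc 1 jstar) ×ˢ (Finset.Icc 1 jstar)).card :=
          Finset.card_filter_le _ _
      _ = jstar * jstar := by simp [Finset.card_product, Nat.card_Icc]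
  have hv1 : vstar ≤ 1 := by
    have h := hconst jstar le_rfl (le_of_lt hjn)
    rw [frobPot] at h
    rw [← h]
    rw [div_le_one (by positivity)]
    have : (recCount x ε jstar : ℝ) ≤ (jstar : ℝ) * jstar := by exact_mod_cast hNjs
    nlinarith
  -- N values
  have hN1 : (recCount x ε (j' + 1) : ℝ) = vstar * ((j' : ℝ) + 1) ^ 2 := by
    have h := hconst (j' + 1) (by omega) (by omega)
    rw [frobPot] at h
    have hpos : ((j' : ℝ) + 1) ^ 2 ≠ 0 := by positivity
    push_cast at h ⊢
    field_simp at h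
    linarith [h]
  have hN0 : (recCount x ε j' : ℝ) = vstar * (j' : ℝ) ^ 2 := by
    have h := hconst j' (by omega) (by omega)
    rw [frobPot] at h
    have hj'pos : (0 : ℝ) < (j' : ℝ) := by
      have : 0 < j' := by omega
      exact_mod_cast this
    field_simp at h
    linarith [h]
  set D := ((Finset.Icc 1 j').filter (fun k => ‖x (j' + 1) - x k‖ < ε)).card with hD
  have hstep : recCount x ε (j' + 1) = recCount x ε j' + (2 * D + 1) :=
    recCount_succ_s8 x ε hε j'
  have hDreal : (2 * (D : ℝ) + 1) = vstar * (2 * (j' : ℝ) + 1) := by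
    have : (recCount x ε (j' + 1) : ℝ) = (recCount x ε j' : ℝ) + (2 * D + 1) := by
      exact_mod_cast hstep
    rw [hN1, hN0] at this
    nlinarith [this]
  -- D > i'
  have hDgt : i' < D := by
    have hcast : ((i' : ℝ) + 1) * (1 - vstar) < (jstar : ℝ) * vstar - (1 - vstar) / 2 := by
      push_cast at hhor; linarith
    have hj'cast : (j' : ℝ) = (jstar : ℝ) + i' := by push_cast [hj']; ring
    have : (i' : ℝ) < D := by nlinarith [hDreal, hcast, hv1, hj'cast]
    exact_mod_cast this
  -- split the count
  set cJ := ((Finset.Icc 1 jstar).filter (fun k => ‖x (j' + 1) - x k‖ < ε)).card with hcJ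
  have hsub : D ≤ cJ + i' := by
    have hss : (Finset.Icc 1 j').filter (fun k => ‖x (j' + 1) - x k‖ < ε) ⊆
        ((Finset.Icc 1 jstar).filter (fun k => ‖x (j' + 1) - x k‖ < ε)) ∪
        (Finset.Icc (jstar + 1) j') := by
      intro k hk
      rw [Finset.mem_filter, Finset.mem_Icc] at hk
      rw [Finset.mem_union, Finset.mem_filter, Finset.mem_Icc, Finset.mem_Icc]
      by_cases hks : k ≤ jstar
      · exact Or.inl ⟨⟨hk.1.1, hks⟩, hk.2⟩
      · exact Or.inr ⟨by omega, hk.1.2⟩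
    calc D ≤ (((Finset.Icc 1 jstar).filter (fun k => ‖x (j' + 1) - x k‖ < ε)) ∪
          (Finset.Icc (jstar + 1) j')).card := Finset.card_le_card hss
      _ ≤ cJ + (Finset.Icc (jstar + 1) j').card := Finset.card_union_le _ _
      _ = cJ + i' := by rw [Nat.card_Icc]; omega
  have hcJpos : 0 < cJ := by omega
  obtain ⟨k, hk⟩ := Finset.card_pos.mp hcJpos
  rw [Finset.mem_filter, Finset.mem_Icc] at hk
  refine ⟨k, hk.1.1, hk.1.2, ?_⟩
  rw [hEq]
  exact hk.2
end
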